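/- arXiv:2602.08267 — 2 statements merged into one kernel-verified Lean document; each statement's English description precedes it below -/
import Mathlib

section
/- Let G be a group acting on a data space X by diffeomorphisms, and let the posterior density be p(g | x̃) ∝ p_x(g⁻¹·x̃)·|det J_{g⁻¹}(x̃)|, where J_g(x) denotes the Jacobian of the action of g at x, and the normalization is Z(x̃) = ∫_G e^{-E_x(g⁻¹·x̃)} |det J_{g⁻¹}(x̃)| dμ(g) with respect to a left-invariant Haar measure μ. Then the posterior is G-equivariant: for all g, h ∈ G and x̃ ∈ X, p(h·g | h·x̃) = p(g | x̃). -/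
open MeasureTheory

/-- **Equivariance of the transformation-inversion posterior.**
`p(g | xt) = e^{-E(g⁻¹·xt)} |det J_{g⁻¹}(xt)| / Z(xt)` satisfies
`p(h·g | h·xt) = p(g | xt)` for all `g, h, xt`. -/
theorem posterior_equivariant
    {G X : Type*} [Group G] [MeasurableSpace G] [MulAction G X]
    (μ : Measure G) [μ.IsMulLeftInvariant]
    (E : X → ℝ) (jac : G → X → ℝ)
    (hjac_pos : ∀ (g : G) (x : X), 0 < jac g x)
    (hchain : ∀ (g h : G) (x : X), jac (g * h) x = jac g (h • x) * jac h x)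
    (Z : X → ℝ)
    (hZ : ∀ x : X, Z x = ∫ g, Real.exp (-(E (g⁻¹ • x))) * jac g⁻¹ x ∂μ)
    (hZpos : ∀ x : X, 0 < Z x)
    (hZfin : ∀ x : X, Integrable (fun g : G => Real.exp (-(E (g⁻¹ • x))) * jac g⁻¹ x) μ)
    (p : G → X → ℝ)
    (hp : ∀ (g : G) (x : X), p g x = Real.exp (-(E (g⁻¹ • x))) * jac g⁻¹ x / Z x) :
    ∀ (g h : G) (xt : X), p (h * g) (h • xt) = p g xt := by
  intro g h xt
  set c : ℝ := jac h⁻¹ (h • xt) with hc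
  have hcpos : 0 < c := hjac_pos _ _
  -- key pointwise identity
  have hnum : ∀ k : G, Real.exp (-(E ((h * k)⁻¹ • h • xt))) * jac (h * k)⁻¹ (h • xt)
      = (Real.exp (-(E (k⁻¹ • xt))) * jac k⁻¹ xt) * c := by
    intro k
    have h1 : (h * k)⁻¹ • h • xt = k⁻¹ • xt := by
      rw [mul_inv_rev, mul_smul, inv_smul_smul]
    have h2 : jac (h * k)⁻¹ (h • xt) = jac k⁻¹ xt * c := by
      rw [mul_inv_rev, hchain k⁻¹ h⁻¹ (h • xt), inv_smul_smul]
    rw [h1, h2]; ring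
  -- μ is nonzero, else Z = 0
  have hμne : μ ≠ 0 := by
    intro h0
    have := hZ xt
    rw [h0] at this
    simp at this
    exact absurd this (ne_of_gt (hZpos xt))
  have hmap : Measure.map (fun k : G => h * k) μ = μ :=
    MeasureTheory.Measure.IsMulLeftInvariant.map_mul_left_eq_self h
  have haem : AEMeasurable (fun k : G => h * k) μ := by
    by_contra hna
    rw [Measure.map_of_not_aemeasurable hna] at hmap
    exact hμne hmap.symm
  -- substitution in the integral
  have hsub : (∫ k, Real.exp (-(E (k⁻¹ • h • xt))) * jac k⁻¹ (h • xt) ∂μ)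
      = ∫ k, Real.exp (-(E ((h * k)⁻¹ • h • xt))) * jac (h * k)⁻¹ (h • xt) ∂μ := by
    conv_lhs => rw [← hmap]
    exact integral_map haem (by rw [hmap]; exact (hZfin (h • xt)).1)
  -- Z transforms by factor c
  have hZtrans : Z (h • xt) = Z xt * c := by
    rw [hZ (h • xt), hZ xt, hsub]
    simp only [hnum]
    rw [integral_mul_const]
  rw [hp, hp, hnum g, hZtrans, mul_div_mul_right _ _ (ne_of_gt hcpos)]
end

section
/- Let G be a Lie group with left Haar measure μ and suppose a density p_t on G satisfies p_t(g) = ∫_G k_t(w) p_0(g w⁻¹) λ(w)⁻¹ dμ(w), where λ is the modular function. Then the trivialized score satisfies the target score identity ∇_𝔤 log p_t(g_t) = ∫_G ∇_𝔤 log p_0(g_t b)|_{b = g_t⁻¹ g_0} · p_{0|t}(g_0 | g_t) dμ(g_0), where p_{0|t}(g_0 | g_t) = p_{t|0}(g_t | g_0) p_0(g_0) / p_t(g_t), p_{t|0}(g_t | g_0) = k_t(g_0⁻¹ g_t), and ∇_𝔤 is the trivialized gradient with respect to g_t. -/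
open MeasureTheory


private lemma integral_mul_left_eq_self' {G : Type*} [Group G] [MeasurableSpace G]
    {E : Type*} [NormedAddCommGroup E] [NormedSpace ℝ E]
    (μ : MeasureTheory.Measure G) [μ.IsMulLeftInvariant] (hμ : μ ≠ 0)
    (f : G → E) (g : G) : ∫ x, f (g * x) ∂μ = ∫ x, f x ∂μ := by
  have hφ : AEMeasurable (fun x => g * x) μ := by
    by_contra h
    exact hμ (((MeasureTheory.map_mul_left_eq_self μ g).symm).trans
      (MeasureTheory.Measure.map_of_not_aemeasurable h))
  have hψ : AEMeasurable (fun x => g⁻¹ * x) μ := by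
    by_contra h
    exact hμ (((MeasureTheory.map_mul_left_eq_self μ g⁻¹).symm).trans
      (MeasureTheory.Measure.map_of_not_aemeasurable h))
  by_cases hf : MeasureTheory.AEStronglyMeasurable f μ
  · have h2 : MeasureTheory.AEStronglyMeasurable f (μ.map (fun x => g * x)) := by
      rwa [MeasureTheory.map_mul_left_eq_self μ]
    rw [← MeasureTheory.integral_map hφ h2, MeasureTheory.map_mul_left_eq_self μ]
  · have hfc : ¬ MeasureTheory.AEStronglyMeasurable (fun x => f (g * x)) μ := by
      intro h
      apply hf
      have h2 : MeasureTheory.AEStronglyMeasurable (fun x => f (g * x))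
          (μ.map (fun x => g⁻¹ * x)) := by rwa [MeasureTheory.map_mul_left_eq_self μ]
      have h3 := h2.comp_aemeasurable hψ
      simpa [Function.comp_def] using h3
    rw [MeasureTheory.integral_undef (fun h => hfc h.aestronglyMeasurable),
      MeasureTheory.integral_undef (fun h => hf h.aestronglyMeasurable)]

/-- **Trivialized target score identity.**
Let `G` be a Lie group with left Haar measure `μ`, modular function `lam`
(`dμ(w⁻¹) = lam(w)⁻¹ dμ(w)`), and let `T` be the left-trivialized gradient
operator `T f g = d(L_{g⁻¹})_g ∇f(g) ∈ 𝔤`, satisfying the log-derivative rule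
and differentiation under the integral sign.  If
`p_t(g) = ∫ k_t(w) p₀(g w⁻¹) lam(w)⁻¹ dμ(w)`, then
`∇_𝔤 log p_t(gₜ) = ∫ ∇_𝔤 log p₀(gₜ b)|_{b = gₜ⁻¹ g₀} p_{0|t}(g₀ | gₜ) dμ(g₀)`
with `p_{0|t}(g₀|gₜ) = k_t(g₀⁻¹ gₜ) p₀(g₀) / p_t(gₜ)`. -/
theorem trivialized_target_score_identity
    {G : Type*} [Group G] [MeasurableSpace G]
    {𝔤 : Type*} [NormedAddCommGroup 𝔤] [NormedSpace ℝ 𝔤] [CompleteSpace 𝔤]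
    (μ : Measure G) [μ.IsMulLeftInvariant]
    (lam : G → ℝ) (hlam_pos : ∀ w : G, 0 < lam w)
    -- `dμ(w⁻¹) = lam(w)⁻¹ dμ(w)` (vector-valued change of variables)
    (hinv : ∀ F : G → 𝔤, ∫ w, F w⁻¹ ∂μ = ∫ w, (lam w)⁻¹ • F w ∂μ)
    (p₀ kt pt : G → ℝ)
    (hp₀_pos : ∀ g, 0 < p₀ g) (hkt_pos : ∀ g, 0 < kt g) (hpt_pos : ∀ g, 0 < pt g)
    (hpt : ∀ g, pt g = ∫ w, kt w * p₀ (g * w⁻¹) * (lam w)⁻¹ ∂μ)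
    -- trivialized gradient operator
    (T : (G → ℝ) → G → 𝔤)
    -- log-derivative rule `∇_𝔤 f = f • ∇_𝔤 log f` for positive `f`
    (hT_log : ∀ (f : G → ℝ) (g : G), 0 < f g →
      T f g = f g • T (fun x => Real.log (f x)) g)
    -- differentiation under the integral sign
    (hT_int : ∀ g : G, T pt g
      = ∫ w, (kt w * (lam w)⁻¹) • T (fun x => p₀ (x * w⁻¹)) g ∂μ)
    (gt : G) :
    T (fun x => Real.log (pt x)) gt
      = ∫ g₀, (kt (g₀⁻¹ * gt) * p₀ g₀ / pt gt) •
          T (fun x => Real.log (p₀ (x * (gt⁻¹ * g₀)))) gt ∂μ := by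

  have hpt0 : pt gt ≠ 0 := (hpt_pos gt).ne'
  -- LHS: T (log pt) gt = (pt gt)⁻¹ • T pt gt
  have hlog := hT_log pt gt (hpt_pos gt)
  have hL : T (fun x => Real.log (pt x)) gt = (pt gt)⁻¹ • T pt gt := by
    rw [hlog, smul_smul, inv_mul_cancel₀ hpt0, one_smul]
  -- RHS: change of variables g₀ = gt * u
  have hR : (∫ g₀, (kt (g₀⁻¹ * gt) * p₀ g₀ / pt gt) •
        T (fun x => Real.log (p₀ (x * (gt⁻¹ * g₀)))) gt ∂μ)
      = ∫ u, (kt u⁻¹ * p₀ (gt * u) / pt gt) •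
          T (fun x => Real.log (p₀ (x * u))) gt ∂μ := by
    have hμ : μ ≠ 0 := by
      intro h
      have : pt gt = 0 := by rw [hpt gt, h, integral_zero_measure]
      exact (hpt_pos gt).ne' this
    rw [← integral_mul_left_eq_self' μ hμ (fun g₀ => (kt (g₀⁻¹ * gt) * p₀ g₀ / pt gt) •
        T (fun x => Real.log (p₀ (x * (gt⁻¹ * g₀)))) gt) gt]
    simp [mul_inv_rev, mul_assoc, inv_mul_cancel_left]
  set H : G → 𝔤 := fun w => (kt w * p₀ (gt * w⁻¹) / pt gt) •
      T (fun x => Real.log (p₀ (x * w⁻¹))) gt with hH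
  have hR2 : (∫ u, (kt u⁻¹ * p₀ (gt * u) / pt gt) •
        T (fun x => Real.log (p₀ (x * u))) gt ∂μ) = ∫ w, (lam w)⁻¹ • H w ∂μ := by
    rw [← hinv H]
    simp [hH]
  rw [hL, hT_int gt, hR, hR2, ← integral_smul]
  congr 1
  funext w
  rw [hT_log (fun x => p₀ (x * w⁻¹)) gt (hp₀_pos _)]
  simp only [hH, smul_smul]
  congr 1
  field_simp
end
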